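/- Let c > 0 and R₀ > 0, and let y be a C¹ solution on (0, R₀] of y'(r) = h^{-4/3}(y(r)² - c) satisfying y(R₀) ≥ 0, where h ∈ (0,1]. Then y(r) ≥ √c · tanh(h^{-4/3}√c(R₀ - r)) for all r ∈ (0, R₀]; in particular y(r) ≥ √c tanh(√c/2) for r ∈ (0, R₀/2] when R₀ ≥ 1 and h ≤ 1. -/

import Mathlib

/-!
With `K = h^(-4/3)`, the function `z(r) = √c tanh(K √c (R₀ - r))` solves the same Riccati
equation `z' = K (z² - c)` with `z(R₀) = 0`. The difference `ζ = y - z` then solves the linear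
equation `ζ' = K (y + z) ζ`, so the integrating factor gives
`ζ(r) = ζ(R₀) exp(-∫ᵣ^R₀ K (y + z)) ≥ 0`.
The second claim follows from the monotonicity of `tanh`, since `K ≥ 1` and `R₀ - r ≥ 1/2`.
-/

open Real Set

lemma Real.hasDerivAt_tanh (x : ℝ) : HasDerivAt tanh (1 - tanh x ^ 2) x := by
  have hcosh : cosh x ≠ 0 := (cosh_pos x).ne'
  rw [show tanh = fun x => sinh x / cosh x from funext tanh_eq_sinh_div_cosh]
  refine ((hasDerivAt_sinh x).div (hasDerivAt_cosh x) hcosh).congr_deriv ?_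
  field_simp

lemma Real.tanh_le_tanh {x y : ℝ} (hxy : x ≤ y) : tanh x ≤ tanh y := by
  rwa [← artanh_le_artanh_iff ⟨neg_one_lt_tanh x, tanh_lt_one x⟩
    ⟨neg_one_lt_tanh y, tanh_lt_one y⟩, artanh_tanh, artanh_tanh]

lemma eq_mul_exp_integral_of_hasDerivAt_eq_mul {ζ g : ℝ → ℝ} {a b : ℝ} (hab : a ≤ b)
    (hζ : ContinuousOn ζ (Icc a b)) (hg : ContinuousOn g (Icc a b))
    (hζ' : ∀ x ∈ Ioo a b, HasDerivAt ζ (g x * ζ x) x) :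
    ζ a = ζ b * exp (-∫ x in a..b, g x) := by
  rcases hab.eq_or_lt with rfl | hlt
  · simp
  set G : ℝ → ℝ := fun t => ∫ x in a..t, g x
  have hG : ContinuousOn G (Icc a b) := by
    rw [← uIcc_of_le hab] at hg ⊢
    exact intervalIntegral.continuousOn_primitive_interval' hg.intervalIntegrable left_mem_uIcc
  have hG' : ∀ x ∈ Ioo a b, HasDerivAt G (g x) x := fun x hx =>
    intervalIntegral.integral_hasDerivAt_right
      ((hg.mono (uIcc_subset_Icc (left_mem_Icc.2 hab) ⟨hx.1.le, hx.2.le⟩)).intervalIntegrable)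
      ((hg.mono Ioo_subset_Icc_self).stronglyMeasurableAtFilter isOpen_Ioo x hx)
      (hg.continuousAt (Icc_mem_nhds hx.1 hx.2))
  set F : ℝ → ℝ := fun t => ζ t * exp (-G t)
  have hF' : ∀ x ∈ Ioo a b, HasDerivAt F 0 x := fun x hx => by
    refine ((hζ' x hx).mul (hG' x hx).neg.exp).congr_deriv ?_
    ring
  obtain ⟨_, _, hslope⟩ := exists_hasDerivAt_eq_slope F (fun _ => 0) hlt
    (hζ.mul (continuous_exp.comp_continuousOn hG.neg)) hF'
  have hFab : F a = F b := by
    rw [eq_comm, div_eq_zero_iff, sub_eq_zero] at hslope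
    exact (hslope.resolve_right (sub_ne_zero.2 hlt.ne')).symm
  simpa [F, G] using hFab

lemma le_of_le_right_of_riccati {y z : ℝ → ℝ} {K c a b : ℝ} (hab : a ≤ b)
    (hy : ContinuousOn y (Icc a b)) (hz : ContinuousOn z (Icc a b))
    (hy' : ∀ x ∈ Ioo a b, HasDerivAt y (K * (y x ^ 2 - c)) x)
    (hz' : ∀ x ∈ Ioo a b, HasDerivAt z (K * (z x ^ 2 - c)) x) (hb : z b ≤ y b) :
    z a ≤ y a := by
  have hdiff := eq_mul_exp_integral_of_hasDerivAt_eq_mul (g := fun x => K * (y x + z x)) hab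
    (hy.sub hz) (continuousOn_const.mul (hy.add hz))
    fun x hx => ((hy' x hx).sub (hz' x hx)).congr_deriv (by simp only [Pi.sub_apply]; ring)
  rw [Pi.sub_apply, Pi.sub_apply] at hdiff
  rw [← sub_nonneg, hdiff]
  exact mul_nonneg (sub_nonneg.2 hb) (exp_pos _).le

lemma hasDerivAt_sqrt_mul_tanh {c : ℝ} (hc : 0 ≤ c) (K R₀ r : ℝ) :
    HasDerivAt (fun r => √c * tanh (K * √c * (R₀ - r)))
      (K * ((√c * tanh (K * √c * (R₀ - r))) ^ 2 - c)) r := by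
  have hinner : HasDerivAt (fun r => K * √c * (R₀ - r)) (-(K * √c)) r := by
    simpa using ((hasDerivAt_id r).const_sub R₀).const_mul (K * √c)
  refine (((hasDerivAt_tanh _).comp r hinner).const_mul √c).congr_deriv ?_
  linear_combination (-K) * sq_sqrt hc

theorem stmt_10_general (c R₀ h : ℝ) (hc : 0 < c) (hh : 0 < h) (hh1 : h ≤ 1)
    (y : ℝ → ℝ)
    (hode : ∀ r ∈ Set.Ioc (0 : ℝ) R₀,
      HasDerivWithinAt y (h ^ (-(4 : ℝ) / 3) * ((y r) ^ 2 - c)) (Set.Ioc 0 R₀) r)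
    (hinit : 0 ≤ y R₀) :
    (∀ r ∈ Set.Ioc (0 : ℝ) R₀,
        Real.sqrt c * Real.tanh (h ^ (-(4 : ℝ) / 3) * Real.sqrt c * (R₀ - r)) ≤ y r) ∧
    (1 ≤ R₀ → ∀ r ∈ Set.Ioc (0 : ℝ) (R₀ / 2),
        Real.sqrt c * Real.tanh (Real.sqrt c / 2) ≤ y r) := by
  set K := h ^ (-(4 : ℝ) / 3)
  have hK : 1 ≤ K := one_le_rpow_of_pos_of_le_one_of_nonpos hh hh1 (by norm_num)
  have lower : ∀ r ∈ Ioc 0 R₀, √c * tanh (K * √c * (R₀ - r)) ≤ y r := fun r hr => by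
    have hsub : Icc r R₀ ⊆ Ioc 0 R₀ := Icc_subset_Ioc_iff hr.2 |>.2 ⟨hr.1, le_rfl⟩
    refine le_of_le_right_of_riccati hr.2
      (fun x hx => (hode x (hsub hx)).continuousWithinAt.mono hsub)
      (HasDerivAt.continuousOn fun x _ => hasDerivAt_sqrt_mul_tanh hc.le K R₀ x)
      (fun x hx => (hode x (hsub (Ioo_subset_Icc_self hx))).hasDerivAt
        (Ioc_mem_nhds (hr.1.trans hx.1) hx.2))
      (fun x _ => hasDerivAt_sqrt_mul_tanh hc.le K R₀ x) (by simpa using hinit)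
  refine ⟨lower, fun hR₀ r hr => (lower r ⟨hr.1, hr.2.trans (by linarith)⟩).trans' ?_⟩
  have hR₀r : 1 / 2 ≤ R₀ - r := by linarith [hr.2]
  refine mul_le_mul_of_nonneg_left (tanh_le_tanh ?_) (sqrt_nonneg c)
  calc √c / 2 = 1 * √c * (1 / 2) := by ring
    _ ≤ K * √c * (R₀ - r) := by gcongr

theorem stmt_10 (c R₀ h : ℝ) (hc : 0 < c) (hR₀ : 0 < R₀) (hh : 0 < h) (hh1 : h ≤ 1)
    (y : ℝ → ℝ) (hy : ContDiffOn ℝ 1 y (Set.Ioc 0 R₀))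
    (hode : ∀ r ∈ Set.Ioc (0 : ℝ) R₀,
      HasDerivWithinAt y (h ^ (-(4 : ℝ) / 3) * ((y r) ^ 2 - c)) (Set.Ioc 0 R₀) r)
    (hinit : 0 ≤ y R₀) :
    (∀ r ∈ Set.Ioc (0 : ℝ) R₀,
        Real.sqrt c * Real.tanh (h ^ (-(4 : ℝ) / 3) * Real.sqrt c * (R₀ - r)) ≤ y r) ∧
    (1 ≤ R₀ → ∀ r ∈ Set.Ioc (0 : ℝ) (R₀ / 2),
        Real.sqrt c * Real.tanh (Real.sqrt c / 2) ≤ y r) :=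
  stmt_10_general c R₀ h hc hh hh1 y hode hinit
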